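/- arXiv:2004.14007 — 3 statements merged into one kernel-verified Lean document; each statement's English description precedes it below -/
import Mathlib

section
/- For all integers a_1,…,a_n and every index i with 1 ≤ i ≤ n−1, one has M_{n+1}(a_1,…,a_{i−1}, a_i+1, 1, a_{i+1}+1, a_{i+2},…,a_n) = M_n(a_1,…,a_n). (Operation (a) preserves the matrix M_n.) -/
/-- The elementary matrix `[[a, -1], [1, 0]]`. -/
def genMat (a : ℤ) : Matrix (Fin 2) (Fin 2) ℤ := !![a, -1; 1, 0]

/-- `Mprod [a₁, …, aₙ] = [[aₙ,-1],[1,0]] ⋯ [[a₁,-1],[1,0]]`. -/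
def Mprod (l : List ℤ) : Matrix (Fin 2) (Fin 2) ℤ := ((l.map genMat).reverse).prod

lemma Mprod_append (u w : List ℤ) : Mprod (u ++ w) = Mprod w * Mprod u := by
  simp [Mprod, List.map_append, List.reverse_append]

lemma key (a b : ℤ) :
    genMat (b + 1) * genMat 1 * genMat (a + 1) = genMat b * genMat a := by
  simp only [genMat]
  ext i j
  fin_cases i <;> fin_cases j <;> simp [Matrix.mul_apply, Fin.sum_univ_two] <;> ring

/-- Operation (a) preserves the matrix `Mₙ`. -/
theorem stmt1 (u v : List ℤ) (a b : ℤ) :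
    Mprod (u ++ (a + 1) :: 1 :: (b + 1) :: v) = Mprod (u ++ a :: b :: v) := by
  have h : ∀ x y z : ℤ, ∀ l : List ℤ, Mprod (x :: y :: z :: l) = Mprod l * (genMat z * genMat y * genMat x) := by
    intro x y z l
    simp [Mprod, mul_assoc]
  have h2 : ∀ x y : ℤ, ∀ l : List ℤ, Mprod (x :: y :: l) = Mprod l * (genMat y * genMat x) := by
    intro x y l
    simp [Mprod, mul_assoc]
  rw [Mprod_append, Mprod_append, h, h2, key]
end

section
/- For every n ∈ {1,2,3,4}, there is no n-tuple of strictly positive integers (a_1,…,a_n) such that M_n(a_1,…,a_n) = S or M_n(a_1,…,a_n) = −S. -/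
/-!
Both `S` and `-S` have zero diagonal, so it suffices to see that for `n ≤ 4` and positive `aᵢ`
some diagonal entry of `Mₙ(a₁, …, aₙ)` is nonzero. Multiplying out, the bottom-right entry is
`1, -1, -a₂, 1 - a₂a₃` for `n = 0, …, 4`; for `n = 4` it can only vanish when `a₂ = a₃ = 1`,
and then the top-left entry is `1 - a₁ - a₄ < 0`.
-/

lemma Mprod_nil : Mprod [] = 1 := rfl

lemma Mprod_cons (a : ℤ) (l : List ℤ) : Mprod (a :: l) = Mprod l * genMat a := by
  simp [Mprod]

lemma Mprod_singleton (a : ℤ) : Mprod [a] = !![a, -1; 1, 0] := by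
  simp [Mprod_cons, Mprod_nil, genMat]

lemma Mprod_pair (a b : ℤ) : Mprod [a, b] = !![a * b - 1, -b; a, -1] := by
  rw [Mprod_cons, Mprod_singleton, genMat]
  ext i j; fin_cases i <;> fin_cases j <;> simp [Matrix.mul_apply]; ring

lemma Mprod_triple (a b c : ℤ) :
    Mprod [a, b, c] = !![a * b * c - a - c, 1 - b * c; a * b - 1, -b] := by
  rw [Mprod_cons, Mprod_pair, genMat]
  ext i j; fin_cases i <;> fin_cases j <;> simp [Matrix.mul_apply] <;> ring

lemma Mprod_quadruple (a b c d : ℤ) :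
    Mprod [a, b, c, d] =
      !![a * b * c * d - a * b - a * d - c * d + 1, b - b * c * d + d;
        a * b * c - a - c, 1 - b * c] := by
  rw [Mprod_cons, Mprod_triple, genMat]
  ext i j; fin_cases i <;> fin_cases j <;> simp [Matrix.mul_apply] <;> ring

lemma Mprod_diag_ne_zero_of_length_le_four (l : List ℤ) (h4 : l.length ≤ 4)
    (hpos : ∀ x ∈ l, 0 < x) : Mprod l 0 0 ≠ 0 ∨ Mprod l 1 1 ≠ 0 :=
  match l, h4 with
  | [], _ => by simp [Mprod_nil]
  | [a], _ => by simpa [Mprod_singleton] using (hpos a (by simp)).ne'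
  | [a, b], _ => by simp [Mprod_pair]
  | [a, b, c], _ => by simpa [Mprod_triple] using Or.inr (hpos b (by simp)).ne'
  | [a, b, c, d], _ => by
    simp only [List.mem_cons, List.not_mem_nil, or_false, forall_eq_or_imp, forall_eq] at hpos
    obtain ⟨ha, hb, -, hd⟩ := hpos
    simp only [Mprod_quadruple, Matrix.of_apply, Matrix.cons_val', Matrix.cons_val_zero,
      Matrix.cons_val_one, Matrix.empty_val', Matrix.cons_val_fin_one]
    by_contra! h
    have hbc : b * c = 1 := by linarith [h.2]
    obtain rfl : b = 1 := Int.eq_one_of_mul_eq_one_right hb.le hbc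
    obtain rfl : c = 1 := by simpa using hbc
    linarith [h.1]

theorem stmt6_general (l : List ℤ) (h4 : l.length ≤ 4)
    (hpos : ∀ x ∈ l, 0 < x) :
    Mprod l ≠ !![0, -1; 1, 0] ∧ Mprod l ≠ -!![0, -1; 1, 0] := by
  have hdiag := Mprod_diag_ne_zero_of_length_le_four l h4 hpos
  constructor <;> rintro h <;> rw [h] at hdiag <;> simp at hdiag

/-- For `n ∈ {1,2,3,4}` the equations `Mₙ(a₁,…,aₙ) = ±S` have no positive solution. -/
theorem stmt6 (l : List ℤ) (h1 : 1 ≤ l.length) (h4 : l.length ≤ 4)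
    (hpos : ∀ x ∈ l, 0 < x) :
    Mprod l ≠ !![0, -1; 1, 0] ∧ Mprod l ≠ -!![0, -1; 1, 0] :=
  stmt6_general l h4 hpos
end

section
/- Let n ≥ 2, let a_1,…,a_{n−1} be integers, and let ε ∈ {1,−1}. Then M_n(a_1,…,a_{n−1}, 1) = ε·T if and only if M_{n−1}(a_1,…,a_{n−1}) = −ε·S. In particular, (a_1,…,a_{n−1},1) is a solution of M_n = ±T if and only if (a_1,…,a_{n−1}) is a solution of M_{n−1} = ±S. -/
lemma Mprod_append_one (m : List ℤ) :
    Mprod (m ++ [(1 : ℤ)]) = genMat 1 * Mprod m := by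
  simp [Mprod]

lemma key_s18 (X : Matrix (Fin 2) (Fin 2) ℤ) (ε : ℤ) :
    genMat 1 * X = ε • !![1, 1; 0, 1] ↔ X = (-ε) • !![0, -1; 1, 0] := by
  constructor
  · intro h
    have : (!![0, 1; -1, 1] : Matrix (Fin 2) (Fin 2) ℤ) * (genMat 1 * X)
        = !![0, 1; -1, 1] * (ε • !![1, 1; 0, 1]) := by rw [h]
    rw [← Matrix.mul_assoc, Matrix.mul_smul] at this
    have h1 : (!![0, 1; -1, 1] : Matrix (Fin 2) (Fin 2) ℤ) * genMat 1 = 1 := by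
      simp [genMat]
      decide
    have h2 : (!![0, 1; -1, 1] : Matrix (Fin 2) (Fin 2) ℤ) * !![1, 1; 0, 1]
        = !![0, 1; -1, 0] := by decide
    rw [h1, h2, Matrix.one_mul] at this
    rw [this]
    ext i j
    fin_cases i <;> fin_cases j <;> simp <;> ring
  · intro h
    rw [h, Matrix.mul_smul]
    have : genMat 1 * !![0, -1; 1, 0] = !![-1, -1; 0, -1] := by decide
    rw [this]
    ext i j
    fin_cases i <;> fin_cases j <;> simp <;> ring

/-- For `n ≥ 2`: `Mₙ(a₁,…,a_{n-1},1) = ε·T ↔ M_{n-1}(a₁,…,a_{n-1}) = -ε·S`;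
in particular `(a₁,…,a_{n-1},1)` solves `Mₙ = ±T` iff `(a₁,…,a_{n-1})` solves
`M_{n-1} = ±S`. -/
theorem stmt18 (m : List ℤ) (hm : m ≠ []) :
    (∀ ε : ℤ, ε = 1 ∨ ε = -1 →
      (Mprod (m ++ [(1 : ℤ)]) = ε • !![1, 1; 0, 1] ↔
        Mprod m = (-ε) • !![0, -1; 1, 0])) ∧
    ((Mprod (m ++ [(1 : ℤ)]) = !![1, 1; 0, 1] ∨
        Mprod (m ++ [(1 : ℤ)]) = -!![1, 1; 0, 1]) ↔
      (Mprod m = !![0, -1; 1, 0] ∨ Mprod m = -!![0, -1; 1, 0])) := by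
  have h := fun ε => (Mprod_append_one m ▸ key_s18 (Mprod m) ε)
  constructor
  · intro ε _; exact h ε
  · have h1 := h 1
    have h2 := h (-1)
    simp only [one_smul, neg_neg, neg_smul] at h1 h2
    tauto
end
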